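/- Let M, α1, α2, α3, β1, β2, β3 > 0, γ > −1, and N, c1, c2 ∈ ℝ. Then G_s is strictly concave on the open convex set R = {(r1, r2, p) ∈ ℝ³ : α2·exp(α3·r1) < α1, β2·exp(β3·r2) < β1, p > 0}; consequently any critical point of G_s in R is the unique global maximizer of G_s over R. -/

import Mathlib

open Real Set Filter Topology

section Aux

private lemma amgm27' (A B C : ℝ) (hA : 0 ≤ A) (hB : 0 ≤ B) (hC : 0 ≤ C) :
    27 * (A * B * C) ≤ (A + B + C) ^ 3 := by
  nlinarith [mul_nonneg hA (sq_nonneg (B - C)), mul_nonneg hB (sq_nonneg (A - C)),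
    mul_nonneg hC (sq_nonneg (A - B)),
    mul_nonneg (add_nonneg (add_nonneg hA hB) hC) (sq_nonneg (A - B)),
    mul_nonneg (add_nonneg (add_nonneg hA hB) hC) (sq_nonneg (B - C)),
    mul_nonneg (add_nonneg (add_nonneg hA hB) hC) (sq_nonneg (A - C))]

private lemma amgm3' (A B C D : ℝ) (hA : 0 ≤ A) (hB : 0 ≤ B) (hC : 0 ≤ C)
    (h : D ^ 3 ≤ A * B * C) : 3 * D ≤ A + B + C := by
  have h1 : (3 * D) ^ 3 ≤ (A + B + C) ^ 3 := by
    calc (3 * D) ^ 3 = 27 * D ^ 3 := by ring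
    _ ≤ 27 * (A * B * C) := by linarith
    _ ≤ (A + B + C) ^ 3 := amgm27' A B C hA hB hC
  exact le_of_pow_le_pow_left₀ (by norm_num) (by positivity) h1

private lemma tangent' (x q y z w1 w2 : ℝ) (hx : 0 < x) (hq : 0 < q) (hy : 0 < y)
    (hz : 0 < z) (hw1 : 0 < w1) (hw2 : 0 < w2) :
    3 * x * q ^ 2 / (w1 * w2) - q ^ 3 * y / (w1 ^ 2 * w2) - q ^ 3 * z / (w1 * w2 ^ 2)
      ≤ x ^ 3 / (y * z) := by
  have poly : 3 * (x * q ^ 2 * y * z * w1 * w2)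
      ≤ x ^ 3 * w1 ^ 2 * w2 ^ 2 + q ^ 3 * y ^ 2 * z * w2 + q ^ 3 * y * z ^ 2 * w1 :=
    amgm3' _ _ _ _ (by positivity) (by positivity) (by positivity) (le_of_eq (by ring))
  have e1 : x ^ 3 / (y * z)
      - (3 * x * q ^ 2 / (w1 * w2) - q ^ 3 * y / (w1 ^ 2 * w2) - q ^ 3 * z / (w1 * w2 ^ 2))
      = (x ^ 3 * w1 ^ 2 * w2 ^ 2 + q ^ 3 * y ^ 2 * z * w2 + q ^ 3 * y * z ^ 2 * w1
          - 3 * (x * q ^ 2 * y * z * w1 * w2)) / (y * z * w1 ^ 2 * w2 ^ 2) := by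
    field_simp; ring
  have h2 : 0 ≤ (x ^ 3 * w1 ^ 2 * w2 ^ 2 + q ^ 3 * y ^ 2 * z * w2 + q ^ 3 * y * z ^ 2 * w1
      - 3 * (x * q ^ 2 * y * z * w1 * w2)) / (y * z * w1 ^ 2 * w2 ^ 2) :=
    div_nonneg (by linarith) (by positivity)
  linarith

private lemma Wlem' (a b p q A1 A2 B1 B2 : ℝ) (ha : 0 < a) (hb : 0 < b) (hab : a + b = 1)
    (hp : 0 < p) (hq : 0 < q) (hA1 : 0 < A1) (hA2 : 0 < A2) (hB1 : 0 < B1) (hB2 : 0 < B2) :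
    (a * p + b * q) ^ 3 / ((a * A1 + b * B1) * (a * A2 + b * B2))
      ≤ a * (p ^ 3 / (A1 * A2)) + b * (q ^ 3 / (B1 * B2)) := by
  have hW1 : 0 < a * A1 + b * B1 := by positivity
  have hW2 : 0 < a * A2 + b * B2 := by positivity
  have hQ : 0 < a * p + b * q := by positivity
  have t1 := tangent' p (a * p + b * q) A1 A2 (a * A1 + b * B1) (a * A2 + b * B2)
    hp hQ hA1 hA2 hW1 hW2
  have t2 := tangent' q (a * p + b * q) B1 B2 (a * A1 + b * B1) (a * A2 + b * B2)
    hq hQ hB1 hB2 hW1 hW2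
  have key : (a * p + b * q) ^ 3 / ((a * A1 + b * B1) * (a * A2 + b * B2))
      = a * (3 * p * (a * p + b * q) ^ 2 / ((a * A1 + b * B1) * (a * A2 + b * B2))
          - (a * p + b * q) ^ 3 * A1 / ((a * A1 + b * B1) ^ 2 * (a * A2 + b * B2))
          - (a * p + b * q) ^ 3 * A2 / ((a * A1 + b * B1) * (a * A2 + b * B2) ^ 2))
        + b * (3 * q * (a * p + b * q) ^ 2 / ((a * A1 + b * B1) * (a * A2 + b * B2))
          - (a * p + b * q) ^ 3 * B1 / ((a * A1 + b * B1) ^ 2 * (a * A2 + b * B2))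
          - (a * p + b * q) ^ 3 * B2 / ((a * A1 + b * B1) * (a * A2 + b * B2) ^ 2)) := by
    have hb' : b = 1 - a := by linarith
    subst hb'
    field_simp
    ring
  rw [key]
  have m1 := mul_le_mul_of_nonneg_left t1 ha.le
  have m2 := mul_le_mul_of_nonneg_left t2 hb.le
  linarith

private lemma cube_strict' (a b p q : ℝ) (ha : 0 < a) (hb : 0 < b) (hab : a + b = 1)
    (hp : 0 < p) (hq : 0 < q) (hpq : p ≠ q) :
    (a * p + b * q) ^ 3 < a * p ^ 3 + b * q ^ 3 := by
  have h0 : p - q ≠ 0 := sub_ne_zero.2 hpq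
  have h2 : 0 < (p - q) ^ 2 := by positivity
  have key : a * p ^ 3 + b * q ^ 3 - (a * p + b * q) ^ 3
      = a * b * (p - q) ^ 2 * (a * p + b * q + p + q) := by
    have hb' : b = 1 - a := by linarith
    subst hb'; ring
  nlinarith [mul_pos (mul_pos (mul_pos ha hb) h2)
    (by positivity : (0:ℝ) < a * p + b * q + p + q)]

private lemma core' (a b p q A1 A2 B1 B2 C1 C2 : ℝ) (ha : 0 < a) (hb : 0 < b) (hab : a + b = 1)
    (hp : 0 < p) (hq : 0 < q) (hA1 : 0 < A1) (hA2 : 0 < A2) (hB1 : 0 < B1) (hB2 : 0 < B2)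
    (hC1 : a * A1 + b * B1 ≤ C1) (hC2 : a * A2 + b * B2 ≤ C2)
    (hstrict : a * A1 + b * B1 < C1 ∨ a * A2 + b * B2 < C2 ∨ (A1 = B1 ∧ A2 = B2 ∧ p ≠ q)) :
    (a * p + b * q) ^ 3 / (C1 * C2) < a * (p ^ 3 / (A1 * A2)) + b * (q ^ 3 / (B1 * B2)) := by
  have hW1 : 0 < a * A1 + b * B1 := by positivity
  have hW2 : 0 < a * A2 + b * B2 := by positivity
  have hQ : 0 < a * p + b * q := by positivity
  have hC1p : 0 < C1 := lt_of_lt_of_le hW1 hC1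
  have hC2p : 0 < C2 := lt_of_lt_of_le hW2 hC2
  rcases hstrict with h | h | ⟨e1, e2, hpq⟩
  · have hlt : (a * A1 + b * B1) * (a * A2 + b * B2) < C1 * C2 := by
      nlinarith [mul_lt_mul_of_pos_right h hW2, mul_le_mul_of_nonneg_left hC2 hC1p.le]
    calc (a * p + b * q) ^ 3 / (C1 * C2)
        < (a * p + b * q) ^ 3 / ((a * A1 + b * B1) * (a * A2 + b * B2)) :=
          div_lt_div_of_pos_left (by positivity) (by positivity) hlt
      _ ≤ _ := Wlem' a b p q A1 A2 B1 B2 ha hb hab hp hq hA1 hA2 hB1 hB2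
  · have hlt : (a * A1 + b * B1) * (a * A2 + b * B2) < C1 * C2 := by
      nlinarith [mul_lt_mul_of_pos_left h hW1, mul_le_mul_of_nonneg_right hC1 hC2p.le]
    calc (a * p + b * q) ^ 3 / (C1 * C2)
        < (a * p + b * q) ^ 3 / ((a * A1 + b * B1) * (a * A2 + b * B2)) :=
          div_lt_div_of_pos_left (by positivity) (by positivity) hlt
      _ ≤ _ := Wlem' a b p q A1 A2 B1 B2 ha hb hab hp hq hA1 hA2 hB1 hB2
  · subst e1; subst e2
    have hcube := cube_strict' a b p q ha hb hab hp hq hpq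
    have hD : 0 < A1 * A2 := mul_pos hA1 hA2
    have hA1C : A1 ≤ C1 := by
      have h : A1 = a * A1 + b * A1 := by linear_combination (-A1) * hab
      linarith
    have hA2C : A2 ≤ C2 := by
      have h : A2 = a * A2 + b * A2 := by linear_combination (-A2) * hab
      linarith
    have step1 : (a * p + b * q) ^ 3 / (C1 * C2) ≤ (a * p + b * q) ^ 3 / (A1 * A2) := by
      apply div_le_div_of_nonneg_left (by positivity) hD
      exact mul_le_mul hA1C hA2C hA2.le hC1p.le
    have step2 : (a * p + b * q) ^ 3 / (A1 * A2)
        < a * (p ^ 3 / (A1 * A2)) + b * (q ^ 3 / (A1 * A2)) := by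
      have he : a * (p ^ 3 / (A1 * A2)) + b * (q ^ 3 / (A1 * A2))
          = (a * p ^ 3 + b * q ^ 3) / (A1 * A2) := by ring
      rw [he]
      exact (div_lt_div_iff_of_pos_right hD).2 hcube
    linarith

/-- critical point of a strictly concave function on a convex set is the strict max -/
private lemma crit_max' {E : Type*} [NormedAddCommGroup E] [NormedSpace ℝ E]
    {f : E → ℝ} {s : Set E} (hf : StrictConcaveOn ℝ s f) {x : E} (hx : x ∈ s)
    (hd : DifferentiableAt ℝ f x) (h0 : fderiv ℝ f x = 0)
    {y : E} (hy : y ∈ s) (hxy : y ≠ x) : f y < f x := by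
  have weak : ∀ z ∈ s, f z ≤ f x := by
    intro z hz
    set g : ℝ → ℝ := fun t => f (x + t • (z - x)) with hg
    have hF : HasFDerivAt f (0 : E →L[ℝ] ℝ) x := h0 ▸ hd.hasFDerivAt
    have hF' : HasFDerivAt f (0 : E →L[ℝ] ℝ) (x + (0:ℝ) • (z - x)) := by simpa using hF
    have hc : HasDerivAt (fun t : ℝ => x + t • (z - x)) (z - x) 0 := by
      simpa using ((hasDerivAt_id (0 : ℝ)).smul_const (z - x)).const_add x
    have hg0 : HasDerivAt g 0 0 := by
      have := hF'.comp_hasDerivAt 0 hc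
      rw [ContinuousLinearMap.zero_apply] at this
      exact this
    have hslope : Tendsto (slope g 0) (𝓝[>] 0) (𝓝 0) :=
      (hasDerivAt_iff_tendsto_slope.1 hg0).mono_left
        (nhdsWithin_mono 0 (fun t ht => ne_of_gt ht))
    have hev : ∀ᶠ t in 𝓝[>] (0:ℝ), f z - f x ≤ slope g 0 t := by
      filter_upwards [Ioo_mem_nhdsGT_of_mem (by norm_num : (0:ℝ) ∈ Ico (0:ℝ) 1)]
      intro t ht
      obtain ⟨ht0, ht1⟩ := ht
      have hcomb : (1 - t) • x + t • z = x + t • (z - x) := by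
        rw [sub_smul, one_smul, smul_sub]; abel
      have hcc := hf.concaveOn.2 hx hz (by linarith : (0:ℝ) ≤ 1 - t) ht0.le (by ring)
      rw [hcomb] at hcc
      have hgt : (1 - t) * f x + t * f z ≤ g t := by simpa [hg, smul_eq_mul] using hcc
      have hgz : g 0 = f x := by simp [hg]
      rw [slope_def_field, sub_zero, le_div_iff₀ ht0]
      nlinarith [hgt, hgz]
    have := ge_of_tendsto hslope hev
    linarith
  have hm : (1/2 : ℝ) • x + (1/2 : ℝ) • y ∈ s :=
    hf.1 hx hy (by norm_num) (by norm_num) (by norm_num)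
  have hmid := hf.2 hx hy (Ne.symm hxy) (by norm_num : (0:ℝ) < 1/2) (by norm_num : (0:ℝ) < 1/2)
    (by norm_num)
  have hw := weak _ hm
  have h2 : (1/2:ℝ) * f x + (1/2:ℝ) * f y < f ((1/2:ℝ) • x + (1/2:ℝ) • y) := by
    simpa [smul_eq_mul] using hmid
  linarith

end Aux



/-- Substitutes bundling profit as a function on ℝ³ (uncurried):
G_s(r1, r2, p) = M·p·(1 − (1/2 + γ²)·p²/((1+γ)²·u1(r1)·u2(r2))) − N·c1·(1−r1) − N·c2·(1−r2),
with u1(r1) = α1 − α2·exp(α3·r1) and u2(r2) = β1 − β2·exp(β3·r2). -/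
noncomputable def GsFun (M N c1 c2 α1 α2 α3 β1 β2 β3 γ : ℝ) (x : ℝ × ℝ × ℝ) : ℝ :=
  M * x.2.2 * (1 - (1 / 2 + γ ^ 2) * x.2.2 ^ 2 /
      ((1 + γ) ^ 2 * (α1 - α2 * Real.exp (α3 * x.1)) *
        (β1 - β2 * Real.exp (β3 * x.2.1)))) -
    N * c1 * (1 - x.1) - N * c2 * (1 - x.2.1)

private lemma GsFun_eq (M N c1 c2 α1 α2 α3 β1 β2 β3 γ : ℝ) (z : ℝ × ℝ × ℝ)
    (h1 : α1 - α2 * Real.exp (α3 * z.1) ≠ 0) (h2 : β1 - β2 * Real.exp (β3 * z.2.1) ≠ 0)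
    (h3 : (1 + γ) ≠ 0) :
    GsFun M N c1 c2 α1 α2 α3 β1 β2 β3 γ z
      = M * z.2.2 - (M * (1 / 2 + γ ^ 2) / (1 + γ) ^ 2) *
          (z.2.2 ^ 3 / ((α1 - α2 * Real.exp (α3 * z.1)) * (β1 - β2 * Real.exp (β3 * z.2.1))))
        - N * c1 * (1 - z.1) - N * c2 * (1 - z.2.1) := by
  unfold GsFun
  field_simp

private lemma GsFun_diff (M N c1 c2 α1 α2 α3 β1 β2 β3 γ : ℝ) (x : ℝ × ℝ × ℝ)
    (hden : (1 + γ) ^ 2 * (α1 - α2 * Real.exp (α3 * x.1)) *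
        (β1 - β2 * Real.exp (β3 * x.2.1)) ≠ 0) :
    DifferentiableAt ℝ (GsFun M N c1 c2 α1 α2 α3 β1 β2 β3 γ) x := by
  unfold GsFun
  have h1 : DifferentiableAt ℝ (fun z : ℝ × ℝ × ℝ => (1 + γ) ^ 2 * (α1 - α2 * Real.exp (α3 * z.1)) *
      (β1 - β2 * Real.exp (β3 * z.2.1))) x := by
    apply DifferentiableAt.mul
    apply DifferentiableAt.mul
    · exact differentiableAt_const _
    · exact (differentiableAt_const _).sub
        ((differentiableAt_const _).mul (((differentiableAt_const α3).mul differentiableAt_fst).exp))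
    · exact (differentiableAt_const _).sub
        ((differentiableAt_const _).mul (((differentiableAt_const β3).mul differentiableAt_snd.fst).exp))
  have h2 : DifferentiableAt ℝ (fun z : ℝ × ℝ × ℝ => z.2.2) x := differentiableAt_snd.snd
  apply DifferentiableAt.sub
  apply DifferentiableAt.sub
  · apply DifferentiableAt.mul ((differentiableAt_const M).mul h2)
    apply DifferentiableAt.sub (differentiableAt_const 1)
    simp only [div_eq_mul_inv]
    exact ((differentiableAt_const _).mul (h2.pow 2)).mul (h1.inv hden)
  · exact (differentiableAt_const _).mul ((differentiableAt_const 1).sub differentiableAt_fst)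
  · exact (differentiableAt_const _).mul ((differentiableAt_const 1).sub differentiableAt_snd.fst)


set_option maxHeartbeats 2000000 in
/-- G_s is strictly concave on the open convex set
R = {(r1, r2, p) : α2·exp(α3·r1) < α1, β2·exp(β3·r2) < β1, p > 0}; consequently any
critical point of G_s in R is the unique global maximizer of G_s over R. -/
theorem substitutes_profit_strictly_concave (M N c1 c2 α1 α2 α3 β1 β2 β3 γ : ℝ)
    (hM : 0 < M)
    (ha1 : 0 < α1) (ha2 : 0 < α2) (ha3 : 0 < α3)
    (hb1 : 0 < β1) (hb2 : 0 < β2) (hb3 : 0 < β3)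
    (hγ : -1 < γ) :
    StrictConcaveOn ℝ
      {x : ℝ × ℝ × ℝ | α2 * Real.exp (α3 * x.1) < α1 ∧
        β2 * Real.exp (β3 * x.2.1) < β1 ∧ 0 < x.2.2}
      (GsFun M N c1 c2 α1 α2 α3 β1 β2 β3 γ) ∧
    ∀ x ∈ {x : ℝ × ℝ × ℝ | α2 * Real.exp (α3 * x.1) < α1 ∧
        β2 * Real.exp (β3 * x.2.1) < β1 ∧ 0 < x.2.2},
      fderiv ℝ (GsFun M N c1 c2 α1 α2 α3 β1 β2 β3 γ) x = 0 →
      ∀ y ∈ {x : ℝ × ℝ × ℝ | α2 * Real.exp (α3 * x.1) < α1 ∧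
          β2 * Real.exp (β3 * x.2.1) < β1 ∧ 0 < x.2.2},
        y ≠ x →
        GsFun M N c1 c2 α1 α2 α3 β1 β2 β3 γ y <
        GsFun M N c1 c2 α1 α2 α3 β1 β2 β3 γ x := by
  have h1γ : (0:ℝ) < 1 + γ := by linarith
  have hγne : (1:ℝ) + γ ≠ 0 := ne_of_gt h1γ
  have hK : 0 < M * (1 / 2 + γ ^ 2) / (1 + γ) ^ 2 := by positivity
  -- Convexity of the set
  have hs : Convex ℝ {x : ℝ × ℝ × ℝ | α2 * Real.exp (α3 * x.1) < α1 ∧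
      β2 * Real.exp (β3 * x.2.1) < β1 ∧ 0 < x.2.2} := by
    intro x hx y hy a b ha hb hab
    obtain ⟨hx1, hx2, hx3⟩ := hx
    obtain ⟨hy1, hy2, hy3⟩ := hy
    have hcomp1 : (a • x + b • y).1 = a * x.1 + b * y.1 := rfl
    have hcomp2 : (a • x + b • y).2.1 = a * x.2.1 + b * y.2.1 := rfl
    have hcomp3 : (a • x + b • y).2.2 = a * x.2.2 + b * y.2.2 := rfl
    refine ⟨?_, ?_, ?_⟩
    · show α2 * Real.exp (α3 * (a • x + b • y).1) < α1
      rw [hcomp1]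
      rcases ha.lt_or_eq with h | h
      · have hexp : Real.exp (a * (α3 * x.1) + b * (α3 * y.1))
            ≤ a * Real.exp (α3 * x.1) + b * Real.exp (α3 * y.1) := by
          have hcv := convexOn_exp.2 (Set.mem_univ (α3 * x.1)) (Set.mem_univ (α3 * y.1)) ha hb hab
          simpa [smul_eq_mul] using hcv
        rw [show α3 * (a * x.1 + b * y.1) = a * (α3 * x.1) + b * (α3 * y.1) from by ring]
        nlinarith [mul_le_mul_of_nonneg_left hexp ha2.le, mul_lt_mul_of_pos_left hx1 h,
          mul_le_mul_of_nonneg_left hy1.le hb]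
      · rw [← h] at hab ⊢
        have hb1' : b = 1 := by linarith
        rw [hb1', show α3 * (0 * x.1 + 1 * y.1) = α3 * y.1 from by ring]
        exact hy1
    · show β2 * Real.exp (β3 * (a • x + b • y).2.1) < β1
      rw [hcomp2]
      rcases ha.lt_or_eq with h | h
      · have hexp : Real.exp (a * (β3 * x.2.1) + b * (β3 * y.2.1))
            ≤ a * Real.exp (β3 * x.2.1) + b * Real.exp (β3 * y.2.1) := by
          have hcv := convexOn_exp.2 (Set.mem_univ (β3 * x.2.1)) (Set.mem_univ (β3 * y.2.1)) ha hb hab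
          simpa [smul_eq_mul] using hcv
        rw [show β3 * (a * x.2.1 + b * y.2.1) = a * (β3 * x.2.1) + b * (β3 * y.2.1) from by ring]
        nlinarith [mul_le_mul_of_nonneg_left hexp hb2.le, mul_lt_mul_of_pos_left hx2 h,
          mul_le_mul_of_nonneg_left hy2.le hb]
      · rw [← h] at hab ⊢
        have hb1' : b = 1 := by linarith
        rw [hb1', show (0:ℝ) * x.2.1 + 1 * y.2.1 = y.2.1 from by ring]
        exact hy2
    · show 0 < (a • x + b • y).2.2
      rw [hcomp3]
      rcases ha.lt_or_eq with h | h
      · exact add_pos_of_pos_of_nonneg (mul_pos h hx3) (mul_nonneg hb hy3.le)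
      · rw [← h] at hab ⊢
        have hb1' : b = 1 := by linarith
        rw [hb1']
        nlinarith [hy3]
  -- Strict concavity
  have hconc : StrictConcaveOn ℝ
      {x : ℝ × ℝ × ℝ | α2 * Real.exp (α3 * x.1) < α1 ∧
        β2 * Real.exp (β3 * x.2.1) < β1 ∧ 0 < x.2.2}
      (GsFun M N c1 c2 α1 α2 α3 β1 β2 β3 γ) := by
    refine ⟨hs, ?_⟩
    intro x hx y hy hne a b ha hb hab
    obtain ⟨hx1, hx2, hx3⟩ := hx
    obtain ⟨hy1, hy2, hy3⟩ := hy
    have hA1 : 0 < α1 - α2 * Real.exp (α3 * x.1) := by linarith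
    have hA2 : 0 < β1 - β2 * Real.exp (β3 * x.2.1) := by linarith
    have hB1 : 0 < α1 - α2 * Real.exp (α3 * y.1) := by linarith
    have hB2 : 0 < β1 - β2 * Real.exp (β3 * y.2.1) := by linarith
    -- concavity of u1, u2 along the segment
    have hexp1 : Real.exp (α3 * (a * x.1 + b * y.1))
        ≤ a * Real.exp (α3 * x.1) + b * Real.exp (α3 * y.1) := by
      have hcv := convexOn_exp.2 (Set.mem_univ (α3 * x.1)) (Set.mem_univ (α3 * y.1))
        ha.le hb.le hab
      rw [show α3 * (a * x.1 + b * y.1) = a * (α3 * x.1) + b * (α3 * y.1) from by ring]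
      simpa [smul_eq_mul] using hcv
    have hexp2 : Real.exp (β3 * (a * x.2.1 + b * y.2.1))
        ≤ a * Real.exp (β3 * x.2.1) + b * Real.exp (β3 * y.2.1) := by
      have hcv := convexOn_exp.2 (Set.mem_univ (β3 * x.2.1)) (Set.mem_univ (β3 * y.2.1))
        ha.le hb.le hab
      rw [show β3 * (a * x.2.1 + b * y.2.1) = a * (β3 * x.2.1) + b * (β3 * y.2.1) from by ring]
      simpa [smul_eq_mul] using hcv
    have hC1 : a * (α1 - α2 * Real.exp (α3 * x.1)) + b * (α1 - α2 * Real.exp (α3 * y.1))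
        ≤ α1 - α2 * Real.exp (α3 * (a * x.1 + b * y.1)) := by
      have key : α1 - α2 * Real.exp (α3 * (a * x.1 + b * y.1))
          - (a * (α1 - α2 * Real.exp (α3 * x.1)) + b * (α1 - α2 * Real.exp (α3 * y.1)))
          = α2 * (a * Real.exp (α3 * x.1) + b * Real.exp (α3 * y.1)
              - Real.exp (α3 * (a * x.1 + b * y.1))) := by
        linear_combination (-α1) * hab
      have hpos : 0 ≤ α2 * (a * Real.exp (α3 * x.1) + b * Real.exp (α3 * y.1)
          - Real.exp (α3 * (a * x.1 + b * y.1))) := mul_nonneg ha2.le (by linarith [hexp1])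
      linarith [key, hpos]
    have hC2 : a * (β1 - β2 * Real.exp (β3 * x.2.1)) + b * (β1 - β2 * Real.exp (β3 * y.2.1))
        ≤ β1 - β2 * Real.exp (β3 * (a * x.2.1 + b * y.2.1)) := by
      have key : β1 - β2 * Real.exp (β3 * (a * x.2.1 + b * y.2.1))
          - (a * (β1 - β2 * Real.exp (β3 * x.2.1)) + b * (β1 - β2 * Real.exp (β3 * y.2.1)))
          = β2 * (a * Real.exp (β3 * x.2.1) + b * Real.exp (β3 * y.2.1)
              - Real.exp (β3 * (a * x.2.1 + b * y.2.1))) := by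
        linear_combination (-β1) * hab
      have hpos : 0 ≤ β2 * (a * Real.exp (β3 * x.2.1) + b * Real.exp (β3 * y.2.1)
          - Real.exp (β3 * (a * x.2.1 + b * y.2.1))) := mul_nonneg hb2.le (by linarith [hexp2])
      linarith [key, hpos]
    -- strictness data
    have hstrict : a * (α1 - α2 * Real.exp (α3 * x.1)) + b * (α1 - α2 * Real.exp (α3 * y.1))
          < α1 - α2 * Real.exp (α3 * (a * x.1 + b * y.1))
        ∨ a * (β1 - β2 * Real.exp (β3 * x.2.1)) + b * (β1 - β2 * Real.exp (β3 * y.2.1))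
          < β1 - β2 * Real.exp (β3 * (a * x.2.1 + b * y.2.1))
        ∨ ((α1 - α2 * Real.exp (α3 * x.1)) = (α1 - α2 * Real.exp (α3 * y.1))
            ∧ (β1 - β2 * Real.exp (β3 * x.2.1)) = (β1 - β2 * Real.exp (β3 * y.2.1))
            ∧ x.2.2 ≠ y.2.2) := by
      by_cases h1 : x.1 = y.1
      · by_cases h2 : x.2.1 = y.2.1
        · refine Or.inr (Or.inr ⟨by rw [h1], by rw [h2], ?_⟩)
          intro h3
          apply hne
          rw [Prod.ext_iff]
          exact ⟨h1, by rw [Prod.ext_iff]; exact ⟨h2, h3⟩⟩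
        · refine Or.inr (Or.inl ?_)
          have hne2 : β3 * x.2.1 ≠ β3 * y.2.1 := fun h => h2 (mul_left_cancel₀ hb3.ne' h)
          have hst := strictConvexOn_exp.2 (Set.mem_univ (β3 * x.2.1))
            (Set.mem_univ (β3 * y.2.1)) hne2 ha hb hab
          simp only [smul_eq_mul] at hst
          have key : β1 - β2 * Real.exp (β3 * (a * x.2.1 + b * y.2.1))
              - (a * (β1 - β2 * Real.exp (β3 * x.2.1)) + b * (β1 - β2 * Real.exp (β3 * y.2.1)))
              = β2 * (a * Real.exp (β3 * x.2.1) + b * Real.exp (β3 * y.2.1)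
                  - Real.exp (β3 * (a * x.2.1 + b * y.2.1))) := by
            linear_combination (-β1) * hab
          have hexps : Real.exp (β3 * (a * x.2.1 + b * y.2.1))
              < a * Real.exp (β3 * x.2.1) + b * Real.exp (β3 * y.2.1) := by
            rw [show β3 * (a * x.2.1 + b * y.2.1) = a * (β3 * x.2.1) + b * (β3 * y.2.1) from by
              ring]
            exact hst
          have hpos : 0 < β2 * (a * Real.exp (β3 * x.2.1) + b * Real.exp (β3 * y.2.1)
              - Real.exp (β3 * (a * x.2.1 + b * y.2.1))) := mul_pos hb2 (by linarith [hexps])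
          linarith [key, hpos]
      · refine Or.inl ?_
        have hne1 : α3 * x.1 ≠ α3 * y.1 := fun h => h1 (mul_left_cancel₀ ha3.ne' h)
        have hst := strictConvexOn_exp.2 (Set.mem_univ (α3 * x.1))
          (Set.mem_univ (α3 * y.1)) hne1 ha hb hab
        simp only [smul_eq_mul] at hst
        have key : α1 - α2 * Real.exp (α3 * (a * x.1 + b * y.1))
            - (a * (α1 - α2 * Real.exp (α3 * x.1)) + b * (α1 - α2 * Real.exp (α3 * y.1)))
            = α2 * (a * Real.exp (α3 * x.1) + b * Real.exp (α3 * y.1)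
                - Real.exp (α3 * (a * x.1 + b * y.1))) := by
          linear_combination (-α1) * hab
        have hexps : Real.exp (α3 * (a * x.1 + b * y.1))
            < a * Real.exp (α3 * x.1) + b * Real.exp (α3 * y.1) := by
          rw [show α3 * (a * x.1 + b * y.1) = a * (α3 * x.1) + b * (α3 * y.1) from by ring]
          exact hst
        have hpos : 0 < α2 * (a * Real.exp (α3 * x.1) + b * Real.exp (α3 * y.1)
            - Real.exp (α3 * (a * x.1 + b * y.1))) := mul_pos ha2 (by linarith [hexps])
        linarith [key, hpos]
    have hW1 : 0 < a * (α1 - α2 * Real.exp (α3 * x.1)) + b * (α1 - α2 * Real.exp (α3 * y.1)) := by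
      positivity
    have hW2 : 0 < a * (β1 - β2 * Real.exp (β3 * x.2.1)) + b * (β1 - β2 * Real.exp (β3 * y.2.1)) := by
      positivity
    have hC1p : 0 < α1 - α2 * Real.exp (α3 * (a * x.1 + b * y.1)) := lt_of_lt_of_le hW1 hC1
    have hC2p : 0 < β1 - β2 * Real.exp (β3 * (a * x.2.1 + b * y.2.1)) := lt_of_lt_of_le hW2 hC2
    have hcore := core' a b x.2.2 y.2.2
      (α1 - α2 * Real.exp (α3 * x.1)) (β1 - β2 * Real.exp (β3 * x.2.1))
      (α1 - α2 * Real.exp (α3 * y.1)) (β1 - β2 * Real.exp (β3 * y.2.1))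
      (α1 - α2 * Real.exp (α3 * (a * x.1 + b * y.1)))
      (β1 - β2 * Real.exp (β3 * (a * x.2.1 + b * y.2.1)))
      ha hb hab hx3 hy3 hA1 hA2 hB1 hB2 hC1 hC2 hstrict
    -- rewrite G at the three points
    have hmx : a • x + b • y
        = (a * x.1 + b * y.1, a * x.2.1 + b * y.2.1, a * x.2.2 + b * y.2.2) := rfl
    have ex := GsFun_eq M N c1 c2 α1 α2 α3 β1 β2 β3 γ x hA1.ne' hA2.ne' hγne
    have ey := GsFun_eq M N c1 c2 α1 α2 α3 β1 β2 β3 γ y hB1.ne' hB2.ne' hγne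
    have em := GsFun_eq M N c1 c2 α1 α2 α3 β1 β2 β3 γ
      (a * x.1 + b * y.1, a * x.2.1 + b * y.2.1, a * x.2.2 + b * y.2.2)
      hC1p.ne' hC2p.ne' hγne
    rw [hmx]
    simp only [smul_eq_mul]
    rw [ex, ey, em]
    have hfinal := mul_lt_mul_of_pos_left hcore hK
    have hb' : b = 1 - a := by linarith
    subst hb'
    linarith [hfinal]
  refine ⟨hconc, ?_⟩
  intro x hx hfd y hy hne
  have hA1 : 0 < α1 - α2 * Real.exp (α3 * x.1) := by linarith [hx.1]
  have hA2 : 0 < β1 - β2 * Real.exp (β3 * x.2.1) := by linarith [hx.2.1]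
  have hden : (1 + γ) ^ 2 * (α1 - α2 * Real.exp (α3 * x.1)) *
      (β1 - β2 * Real.exp (β3 * x.2.1)) ≠ 0 := by positivity
  exact crit_max' hconc hx (GsFun_diff M N c1 c2 α1 α2 α3 β1 β2 β3 γ x hden) hfd hy hne
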